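/- arXiv:2011.09593 — 2 statements merged into one kernel-verified Lean document; each statement's English description precedes it below -/
import Mathlib

section
/- For every natural number n, the shifted period-6 alternating window sum of row 2n of Pascal's triangle starting one column to the right of center equals the floor of 3^n/2: Σ_{k∈ℤ} [ C(2n, n + 1 + 6k) − C(2n, n + 3 + 6k) ] = (3^n − 1)/2. -/
/-- Binomial coefficient `C(r, j)` with an integer lower index, equal to `0`
when `j < 0` or `j > r`. -/
def zchoose (r : ℕ) (j : ℤ) : ℤ := if 0 ≤ j then (r.choose j.toNat : ℤ) else 0

/-!
Let `residueSum 6 m c` be the sum of row `m` of Pascal's triangle over the columns `≡ c (mod 6)`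
and `window m c = residueSum 6 m c - residueSum 6 m (c + 2)`. Pascal's rule gives
`window (m + 1) c = window m c + window m (c - 1)`, while the symmetry `j ↦ m - j` of row `m`
together with `6`-periodicity in `c` makes `window (2n) (n - 1)` and `window (2n) (n + 2)` vanish.
Hence `a n = window (2n) (n + 1)` and `b n = window (2n) n` satisfy `a (n+1) = 2 a n + b n` and
`b (n+1) = a n + 2 b n`, so `a n + b n = 3 ^ n` and `b n - a n = 1`.
-/

open Function

lemma zchoose_of_neg {r : ℕ} {j : ℤ} (h : j < 0) : zchoose r j = 0 := by
  simp [zchoose, not_le.2 h]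

lemma zchoose_of_lt {r : ℕ} {j : ℤ} (h : (r : ℤ) < j) : zchoose r j = 0 := by
  simp [zchoose, show 0 ≤ j by omega, Nat.choose_eq_zero_of_lt (show r < j.toNat by omega)]

lemma support_zchoose_subset (r : ℕ) : support (zchoose r) ⊆ Set.Icc 0 (r : ℤ) := by
  intro j hj
  by_contra hmem
  rcases not_and_or.1 hmem with h | h
  · exact hj (zchoose_of_neg (not_le.1 h))
  · exact hj (zchoose_of_lt (not_le.1 h))

lemma zchoose_zero (j : ℤ) : zchoose 0 j = if j = 0 then 1 else 0 := by
  rcases lt_trichotomy j 0 with h | rfl | h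
  · simp [zchoose_of_neg h, h.ne]
  · simp [zchoose]
  · simp [zchoose_of_lt (r := 0) (by exact_mod_cast h), h.ne']

lemma zchoose_succ (r : ℕ) (j : ℤ) : zchoose (r + 1) j = zchoose r j + zchoose r (j - 1) := by
  rcases lt_trichotomy j 0 with h | rfl | h
  · simp [zchoose_of_neg h, zchoose_of_neg (show j - 1 < 0 by omega)]
  · simp [zchoose]
  · have hj : j.toNat = (j - 1).toNat + 1 := by omega
    simp only [zchoose, if_pos h.le, if_pos (show 0 ≤ j - 1 by omega), hj, Nat.choose_succ_succ']
    push_cast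
    ring

lemma zchoose_symm (r : ℕ) (j : ℤ) : zchoose r j = zchoose r (r - j) := by
  rcases lt_or_ge j 0 with h | h
  · rw [zchoose_of_neg h, zchoose_of_lt (by omega)]
  rcases lt_or_ge (r : ℤ) j with hr | hr
  · rw [zchoose_of_lt hr, zchoose_of_neg (by omega)]
  simp only [zchoose, if_pos h, if_pos (show 0 ≤ (r : ℤ) - j by omega)]
  rw [show ((r : ℤ) - j).toNat = r - j.toNat by omega, Nat.choose_symm (by omega)]

noncomputable def residueSum (p : ℤ) (m : ℕ) (c : ℤ) : ℤ := ∑ᶠ k : ℤ, zchoose m (c + p * k)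

section residueSum

variable {p : ℤ}

lemma hasFiniteSupport_zchoose_residue (hp : p ≠ 0) (m : ℕ) (c : ℤ) :
    HasFiniteSupport fun k : ℤ => zchoose m (c + p * k) := by
  have hinj : Injective fun k : ℤ => c + p * k :=
    fun a b h => mul_left_cancel₀ hp (add_left_cancel h)
  change (support (zchoose m ∘ fun k : ℤ => c + p * k)).Finite
  rw [support_comp_eq_preimage]
  exact ((Set.finite_Icc _ _).subset (support_zchoose_subset m)).preimage hinj.injOn

lemma residueSum_succ (hp : p ≠ 0) (m : ℕ) (c : ℤ) :
    residueSum p (m + 1) c = residueSum p m c + residueSum p m (c - 1) := by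
  rw [residueSum, residueSum, residueSum, ← finsum_add_distrib
    (hasFiniteSupport_zchoose_residue hp m c) (hasFiniteSupport_zchoose_residue hp m (c - 1))]
  exact finsum_congr fun k => by rw [zchoose_succ, sub_add_eq_add_sub]

lemma residueSum_add_self (m : ℕ) (c : ℤ) : residueSum p m (c + p) = residueSum p m c := by
  rw [residueSum, residueSum, ← finsum_comp_equiv (Equiv.subRight 1)]
  exact finsum_congr fun k => by rw [Equiv.subRight_apply]; ring_nf

lemma residueSum_symm (m : ℕ) (c : ℤ) : residueSum p m c = residueSum p m (m - c) := by
  rw [residueSum, residueSum, ← finsum_comp_equiv (Equiv.neg ℤ)]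
  exact finsum_congr fun k => by rw [zchoose_symm, Equiv.neg_apply]; ring_nf

lemma residueSum_zero (hp : p ≠ 0) (c : ℤ) : residueSum p 0 c = if p ∣ c then 1 else 0 := by
  simp only [residueSum, zchoose_zero]
  split_ifs with h
  · obtain ⟨j, rfl⟩ := h
    rw [finsum_eq_single _ (-j) fun k hk => if_neg fun h0 => hk ?_]
    · simp
    · linarith [mul_left_cancel₀ hp (show p * j = p * -k by linarith)]
  · exact finsum_eq_zero_of_forall_eq_zero fun k =>
      if_neg fun h0 => h ⟨-k, by linarith⟩

end residueSum

noncomputable def window (m : ℕ) (c : ℤ) : ℤ := residueSum 6 m c - residueSum 6 m (c + 2)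

lemma window_succ_succ (m : ℕ) (c : ℤ) :
    window (m + 2) c = window m c + 2 * window m (c - 1) + window m (c - 2) := by
  simp only [window, residueSum_succ (show (6 : ℤ) ≠ 0 by norm_num)]
  ring_nf

lemma window_center_sub_one (n : ℕ) : window (2 * n) (n - 1) = 0 := by
  rw [window, residueSum_symm, sub_eq_zero]
  congr 1
  push_cast
  ring

lemma window_center_add_two (n : ℕ) : window (2 * n) (n + 2) = 0 := by
  rw [window, show (n : ℤ) + 2 + 2 = n - 2 + 6 by ring, residueSum_add_self, residueSum_symm,
    sub_eq_zero]
  congr 1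
  push_cast
  ring

lemma window_central (n : ℕ) :
    window (2 * n) (n + 1) + window (2 * n) n = 3 ^ n ∧
      window (2 * n) n - window (2 * n) (n + 1) = 1 := by
  induction n with
  | zero => simp [window, residueSum_zero]
  | succ n ih =>
    have ha : window (2 * (n + 1)) ((n + 1 : ℕ) + 1) =
        2 * window (2 * n) (n + 1) + window (2 * n) n := by
      rw [mul_add, mul_one, window_succ_succ, show ((n + 1 : ℕ) : ℤ) + 1 = n + 2 by push_cast; ring,
        window_center_add_two]
      ring_nf
    have hb : window (2 * (n + 1)) (n + 1 : ℕ) =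
        window (2 * n) (n + 1) + 2 * window (2 * n) n := by
      rw [mul_add, mul_one, window_succ_succ]
      push_cast
      rw [add_sub_cancel_right, show (n : ℤ) + 1 - 2 = n - 1 by ring, window_center_sub_one]
      ring
    rw [ha, hb, pow_succ]
    constructor <;> linarith [ih.1, ih.2]

/-- The period-6 alternating window sum of row 2n of Pascal's triangle starting one
column right of center equals ⌊3^n / 2⌋ = (3^n − 1)/2. -/
theorem period_six_window_sum_shifted (n : ℕ) :
    ∑ᶠ k : ℤ, (zchoose (2 * n) (n + 1 + 6 * k) - zchoose (2 * n) (n + 3 + 6 * k)) =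
      (3 ^ n - 1) / 2 := by
  have hsum : ∑ᶠ k : ℤ, (zchoose (2 * n) (n + 1 + 6 * k) - zchoose (2 * n) (n + 3 + 6 * k)) =
      window (2 * n) (n + 1) := by
    rw [window, residueSum, residueSum, finsum_sub_distrib
      (hasFiniteSupport_zchoose_residue (by norm_num) _ _)
      (hasFiniteSupport_zchoose_residue (by norm_num) _ _)]
    ring_nf
  obtain ⟨hadd, hsub⟩ := window_central n
  rw [hsum]
  omega
end

section
/- For every natural number n ≥ 1 and every function J : ℕ → ℤ satisfying J(0) = 0, J(1) = 1, and J(k+2) = J(k+1) + 2·J(k) for all k (the Jacobsthal numbers), the centered period-6 alternating window sum of row n of the 3-Pascal triangle with offset 1 equals J(n−1): Σ_{j∈ℤ} [ T(n, 6j) − T(n, 6j + 1) ] = J(n−1). -/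
open Polynomial in
/-- Trinomial coefficient `T(n, k)`: the coefficient of `x^(n+k)` in `(1 + x + x²)^n`
over `ℤ` (the entries of the 3-Pascal triangle), with `T(n, k) = 0` for `|k| > n`. -/
noncomputable def trinom (n : ℕ) (k : ℤ) : ℤ :=
  if 0 ≤ (n : ℤ) + k then ((1 + X + X ^ 2 : Polynomial ℤ) ^ n).coeff ((n : ℤ) + k).toNat
  else 0

open Polynomial

lemma trinom_eq_zero {n : ℕ} {k : ℤ} (h : (n : ℤ) < |k|) : trinom n k = 0 := by
  unfold trinom
  split_ifs with h0
  · apply coeff_eq_zero_of_natDegree_lt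
    have hd : (1 + X + X ^ 2 : Polynomial ℤ).natDegree ≤ 2 := by compute_degree
    have : ((1 + X + X ^ 2 : Polynomial ℤ) ^ n).natDegree ≤ n * 2 :=
      le_trans (natDegree_pow_le) (by nlinarith)
    have hk : (2 * n : ℤ) < (n : ℤ) + k := by
      rcases abs_cases k with ⟨he, _⟩ | ⟨he, _⟩ <;> omega
    omega
  · rfl

lemma trinom_ne_zero_bound {n : ℕ} {k : ℤ} (h : trinom n k ≠ 0) : k.natAbs ≤ n := by
  by_contra hc
  exact h (trinom_eq_zero (by rw [Int.abs_eq_natAbs]; omega))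

lemma supp_finite (n : ℕ) (r : ℤ) :
    (Function.support fun j : ℤ => trinom n (6 * j + r)).Finite := by
  apply Set.Finite.subset (Set.finite_Icc (-(n : ℤ) - r.natAbs) ((n : ℤ) + r.natAbs))
  intro j hj
  have := trinom_ne_zero_bound hj
  simp only [Set.mem_Icc]
  omega

lemma coeff_tri_mul (Q : Polynomial ℤ) (m : ℕ) :
    ((1 + X + X ^ 2) * Q).coeff (m + 2) = Q.coeff m + Q.coeff (m + 1) + Q.coeff (m + 2) := by
  rw [add_mul, add_mul, one_mul, coeff_add, coeff_add, sq, mul_assoc,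
    show m + 2 = (m + 1) + 1 from rfl, coeff_X_mul, coeff_X_mul, coeff_X_mul]
  ring

lemma coeff_tri_mul_one (Q : Polynomial ℤ) :
    ((1 + X + X ^ 2) * Q).coeff 1 = Q.coeff 0 + Q.coeff 1 := by
  rw [add_mul, add_mul, one_mul, coeff_add, coeff_add, sq, mul_assoc,
    show (1 : ℕ) = 0 + 1 from rfl, coeff_X_mul]
  simp [coeff_X_mul]
  ring

lemma coeff_tri_mul_zero (Q : Polynomial ℤ) :
    ((1 + X + X ^ 2) * Q).coeff 0 = Q.coeff 0 := by
  simp [add_mul, sq, mul_assoc, coeff_X_mul, mul_comm]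

lemma trinom_succ (n : ℕ) (k : ℤ) :
    trinom (n + 1) k = trinom n (k - 1) + trinom n k + trinom n (k + 1) := by
  unfold trinom
  have hpow : (1 + X + X ^ 2 : Polynomial ℤ) ^ (n + 1) = (1 + X + X ^ 2) * (1 + X + X ^ 2) ^ n :=
    pow_succ' _ _
  rcases lt_trichotomy ((n : ℤ) + 1 + k) 0 with h | h | h
  · rw [if_neg (by push_cast; omega), if_neg (by omega), if_neg (by omega), if_neg (by omega)]
    ring
  · -- n+1+k = 0
    rw [if_pos (by push_cast; omega), if_neg (by omega), if_neg (by omega), if_pos (by omega)]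
    have h1 : ((((n : ℕ) + 1 : ℕ) : ℤ) + k).toNat = 0 := by push_cast; omega
    have h2 : ((n : ℤ) + (k + 1)).toNat = 0 := by omega
    rw [h1, h2, hpow, coeff_tri_mul_zero]
    ring
  · rcases lt_trichotomy ((n : ℤ) + 1 + k) 1 with h' | h' | h'
    · omega
    · -- n+1+k = 1, n+k = 0
      rw [if_pos (by push_cast; omega), if_neg (by omega), if_pos (by omega), if_pos (by omega)]
      have h1 : ((((n : ℕ) + 1 : ℕ) : ℤ) + k).toNat = 1 := by push_cast; omega
      have h2 : ((n : ℤ) + k).toNat = 0 := by omega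
      have h3 : ((n : ℤ) + (k + 1)).toNat = 1 := by omega
      rw [h1, h2, h3, hpow, coeff_tri_mul_one]
      ring
    · -- n+1+k ≥ 2
      rw [if_pos (by push_cast; omega), if_pos (by omega), if_pos (by omega), if_pos (by omega)]
      set t := ((n : ℤ) + (k - 1)).toNat with ht
      have h1 : ((((n : ℕ) + 1 : ℕ) : ℤ) + k).toNat = t + 2 := by push_cast; omega
      have h2 : ((n : ℤ) + k).toNat = t + 1 := by omega
      have h3 : ((n : ℤ) + (k + 1)).toNat = t + 2 := by omega
      rw [h1, h2, h3, hpow, coeff_tri_mul]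


noncomputable def W (n : ℕ) (r : ℤ) : ℤ := ∑ᶠ j : ℤ, trinom n (6 * j + r)

lemma W_period (n : ℕ) (r : ℤ) : W n (r + 6) = W n r := by
  unfold W
  rw [← finsum_comp_equiv (Equiv.addRight (1 : ℤ)) (f := fun j => trinom n (6 * j + r))]
  apply finsum_congr
  intro j
  simp [Equiv.coe_addRight]
  ring_nf

lemma W_succ (n : ℕ) (r : ℤ) : W (n + 1) r = W n (r - 1) + W n r + W n (r + 1) := by
  unfold W
  rw [← finsum_add_distrib (supp_finite n (r - 1)) (supp_finite n r),
    ← finsum_add_distrib (Set.Finite.subset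
      (Set.Finite.union (supp_finite n (r - 1)) (supp_finite n r))
      (Function.support_add _ _)) (supp_finite n (r + 1))]
  apply finsum_congr
  intro j
  have := trinom_succ n (6 * j + r)
  rw [show 6 * j + r - 1 = 6 * j + (r - 1) by ring, show 6 * j + r + 1 = 6 * j + (r + 1) by ring] at this
  exact this

lemma W_succ' (n : ℕ) (r a c : ℤ) (ha : a = r - 1) (hc : c = r + 1) :
    W (n + 1) r = W n a + W n r + W n c := by
  subst ha; subst hc; exact W_succ n r

lemma W_single {n : ℕ} {r : ℤ} (h : ∀ j : ℤ, j ≠ 0 → trinom n (6 * j + r) = 0) :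
    W n r = trinom n r := by
  unfold W
  rw [finsum_eq_single _ 0 h]
  norm_num

lemma W_small (n : ℕ) (r : ℤ) (m : ℕ) (hm : (n : ℤ) + r = m) (hn : (n : ℤ) + r.natAbs < 6) :
    W n r = ((1 + X + X ^ 2 : Polynomial ℤ) ^ n).coeff m := by
  have h0 : 0 ≤ (n : ℤ) + r := by omega
  rw [W_single, trinom, if_pos h0, hm]
  · norm_num
  · intro j hj
    apply trinom_eq_zero
    rw [Int.abs_eq_natAbs]
    omega

lemma D_zero (n : ℕ) : W (n + 1) 0 + W (n + 1) 3 - W (n + 1) 1 - W (n + 1) 4 = 0 := by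
  have e0 := W_succ' n 0 (-1) 1 (by ring) (by ring)
  have e3 := W_succ' n 3 2 4 (by ring) (by ring)
  have e1 := W_succ' n 1 0 2 (by ring) (by ring)
  have e4 := W_succ' n 4 3 5 (by ring) (by ring)
  have hp : W n 5 = W n (-1) := by rw [show (5 : ℤ) = -1 + 6 by norm_num, W_period]
  linarith

noncomputable def S (n : ℕ) : ℤ := W n 0 - W n 1

lemma S_rec (n : ℕ) : S (n + 3) = S (n + 2) + 2 * S (n + 1) := by
  have h1 : W (n + 3) 0 = W (n + 2) (-1) + W (n + 2) 0 + W (n + 2) 1 :=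
    W_succ' (n + 2) 0 (-1) 1 (by ring) (by ring)
  have h2 : W (n + 3) 1 = W (n + 2) 0 + W (n + 2) 1 + W (n + 2) 2 :=
    W_succ' (n + 2) 1 0 2 (by ring) (by ring)
  have h3 : W (n + 2) (-1) = W (n + 1) (-2) + W (n + 1) (-1) + W (n + 1) 0 :=
    W_succ' (n + 1) (-1) (-2) 0 (by ring) (by ring)
  have h4 : W (n + 2) 0 = W (n + 1) (-1) + W (n + 1) 0 + W (n + 1) 1 :=
    W_succ' (n + 1) 0 (-1) 1 (by ring) (by ring)
  have h5 : W (n + 2) 1 = W (n + 1) 0 + W (n + 1) 1 + W (n + 1) 2 :=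
    W_succ' (n + 1) 1 0 2 (by ring) (by ring)
  have h6 : W (n + 2) 2 = W (n + 1) 1 + W (n + 1) 2 + W (n + 1) 3 :=
    W_succ' (n + 1) 2 1 3 (by ring) (by ring)
  have hp : W (n + 1) 4 = W (n + 1) (-2) := by
    rw [show (4 : ℤ) = -2 + 6 by norm_num, W_period]
  have hD := D_zero n
  unfold S
  linarith

lemma S_one : S 1 = 0 := by
  unfold S
  rw [W_small 1 0 1 (by norm_num) (by norm_num), W_small 1 1 2 (by norm_num) (by norm_num)]
  simp [coeff_one, coeff_X, coeff_X_pow]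

lemma S_two : S 2 = 1 := by
  unfold S
  rw [W_small 2 0 2 (by norm_num) (by norm_num), W_small 2 1 3 (by norm_num) (by norm_num)]
  have hexp : (1 + X + X ^ 2 : Polynomial ℤ) ^ 2
      = 1 + (X + X) + (X ^ 2 + X ^ 2 + X ^ 2) + (X ^ 3 + X ^ 3) + X ^ 4 := by ring
  rw [hexp]
  simp [coeff_one, coeff_X, coeff_X_pow]

/-- For n ≥ 1, the centered period-6 alternating window sum of row n of the 3-Pascal
triangle with offset 1 equals the Jacobsthal number J(n−1), where J(0) = 0, J(1) = 1
and J(k+2) = J(k+1) + 2·J(k). -/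
theorem trinomial_period_six_window_sum_eq_jacobsthal (n : ℕ) (hn : 1 ≤ n)
    (J : ℕ → ℤ) (hJ0 : J 0 = 0) (hJ1 : J 1 = 1)
    (hJrec : ∀ k, J (k + 2) = J (k + 1) + 2 * J k) :
    ∑ᶠ j : ℤ, (trinom n (6 * j) - trinom n (6 * j + 1)) = J (n - 1) := by
  have key : ∀ m : ℕ, S (m + 1) = J m ∧ S (m + 2) = J (m + 1) := by
    intro m
    induction m with
    | zero => exact ⟨by rw [S_one, hJ0], by rw [S_two, hJ1]⟩
    | succ k ih =>
      refine ⟨ih.2, ?_⟩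
      rw [show k + 1 + 2 = k + 3 from rfl, S_rec, ih.1, ih.2, hJrec]

  have hS : S n = J (n - 1) := by
    obtain ⟨m, rfl⟩ : ∃ m, n = m + 1 := ⟨n - 1, by omega⟩
    simpa using (key m).1
  rw [← hS]
  unfold S W
  rw [← finsum_sub_distrib (supp_finite n 0) (supp_finite n 1)]
  exact finsum_congr fun j => by norm_num
end
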